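/- Let S be an E-unitary inverse semigroup with E = E(S), let s, t ∈ S, and let φ be a semi-character of E with φ(s*·s) = true and φ(t*·t) = true. Then σ(s) = σ(t) if and only if there exists u ∈ S with u ≤ s, u ≤ t, and φ(u*·u) = true. -/

import Mathlib

class InverseSemigroup (S : Type*) extends Semigroup S, StarMul S where
  mul_star_mul_self : ∀ s : S, s * star s * s = s
  star_mul_star_self : ∀ s : S, star s * s * star s = star s
  idem_comm : ∀ e f : S, e * e = e → f * f = f → e * f = f * e

namespace InverseSemigroup

variable {S : Type*} [InverseSemigroup S]

lemma idem_star_mul (s : S) : (star s * s) * (star s * s) = star s * s := by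
  calc (star s * s) * (star s * s) = star s * (s * star s * s) := by
        simp only [mul_assoc]
    _ = star s * s := by rw [mul_star_mul_self]

lemma mul_star_idem (s : S) : (s * star s) * (s * star s) = s * star s := by
  calc (s * star s) * (s * star s) = s * (star s * s * star s) := by
        simp only [mul_assoc]
    _ = s * star s := by rw [star_mul_star_self]

lemma idem_mul {e f : S} (he : e * e = e) (hf : f * f = f) :
    (e * f) * (e * f) = e * f := by
  have hc : f * e = e * f := idem_comm f e hf he
  calc (e * f) * (e * f) = e * (f * e) * f := by simp only [mul_assoc]
    _ = e * (e * f) * f := by rw [hc]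
    _ = (e * e) * (f * f) := by simp only [mul_assoc]
    _ = e * f := by rw [he, hf]

lemma idem_conj {e : S} (he : e * e = e) (s : S) :
    (star s * e * s) * (star s * e * s) = star s * e * s := by
  have hf : (s * star s) * (s * star s) = s * star s := mul_star_idem s
  have hc : e * (s * star s) = (s * star s) * e := idem_comm e _ he hf
  calc (star s * e * s) * (star s * e * s)
      = star s * (e * (s * star s)) * (e * s) := by simp only [mul_assoc]
    _ = star s * ((s * star s) * e) * (e * s) := by rw [hc]
    _ = star s * (s * star s) * (e * e) * s := by simp only [mul_assoc]
    _ = star s * (s * star s) * e * s := by rw [he]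
    _ = (star s * s * star s) * e * s := by simp only [mul_assoc]
    _ = star s * e * s := by rw [star_mul_star_self]

lemma conj_mul {e f : S} (_he : e * e = e) (hf : f * f = f) (s : S) :
    (star s * e * s) * (star s * f * s) = star s * (e * f) * s := by
  have hss : (s * star s) * (s * star s) = s * star s := mul_star_idem s
  have hc : (s * star s) * f = f * (s * star s) := idem_comm _ _ hss hf
  calc (star s * e * s) * (star s * f * s)
      = star s * e * ((s * star s) * f) * s := by simp only [mul_assoc]
    _ = star s * e * (f * (s * star s)) * s := by rw [hc]
    _ = star s * (e * f) * (s * star s * s) := by simp only [mul_assoc]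
    _ = star s * (e * f) * s := by rw [mul_star_mul_self]

lemma conj_ss (s : S) : star s * (s * star s) * s = star s * s := by
  calc star s * (s * star s) * s = (star s * s * star s) * s := by
        simp only [mul_assoc]
    _ = star s * s := by rw [star_mul_star_self]

end InverseSemigroup

open InverseSemigroup

/-- The natural partial order on an inverse semigroup: `s ≤ t` iff `s = t·s*·s`. -/
def nle {S : Type*} [InverseSemigroup S] (s t : S) : Prop := s = t * (star s * s)

/-- `σ(s) = σ(t)` iff `s·e = t·e` for some idempotent `e`. -/
def sigmaEq {S : Type*} [InverseSemigroup S] (s t : S) : Prop :=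
  ∃ e : S, e * e = e ∧ s * e = t * e

/-- `S` is E-unitary if every element above a nonzero idempotent is idempotent. -/
def EUnitary (S : Type*) [InverseSemigroup S] : Prop :=
  ∀ e s : S, e * e = e → nle e s → s * s = s

/-- The semilattice of idempotents of an inverse semigroup. -/
def Idem (S : Type*) [InverseSemigroup S] : Type _ := {e : S // e * e = e}

instance {S : Type*} [InverseSemigroup S] : Mul (Idem S) :=
  ⟨fun e f => ⟨e.1 * f.1, idem_mul e.2 f.2⟩⟩

/-- A semi-character of a semilattice. -/
structure SemiChar (E : Type*) [Mul E] where
  toFun : E → Bool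
  map_mul' : ∀ e f : E, toFun (e * f) = (toFun e && toFun f)
  exists_true : ∃ e : E, toFun e = true

/-- The space `Ê` of semi-characters, with the subspace topology from `Bool^E`. -/
instance {E : Type*} [Mul E] : TopologicalSpace (SemiChar E) :=
  TopologicalSpace.induced (fun χ => χ.toFun) Pi.topologicalSpace

/-- For `e` idempotent, `s*·e·s` is idempotent. -/
def conjIdem {S : Type*} [InverseSemigroup S] (s : S) (e : Idem S) : Idem S :=
  ⟨star s * e.1 * s, idem_conj e.2 s⟩

/-- The semi-character `s·χ` defined by `(s·χ)(e) = χ(s*·e·s)`. -/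
def sDot {S : Type*} [InverseSemigroup S] (s : S) (χ : SemiChar (Idem S))
    (h : χ.toFun ⟨star s * s, idem_star_mul s⟩ = true) : SemiChar (Idem S) where
  toFun e := χ.toFun (conjIdem s e)
  map_mul' e f := by
    have heq : conjIdem s (e * f) = conjIdem s e * conjIdem s f :=
      Subtype.ext (conj_mul e.2 f.2 s).symm
    simp only [heq, χ.map_mul']
  exists_true := ⟨⟨s * star s, mul_star_idem s⟩, by
    have heq : conjIdem s ⟨s * star s, mul_star_idem s⟩
        = (⟨star s * s, idem_star_mul s⟩ : Idem S) := Subtype.ext (conj_ss s)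
    simp only [heq]; exact h⟩

/-! If `s·e = t·e` with `e` idempotent, then the idempotent `t·e·t*` lies below `s·t*`, so
E-unitarity makes `s·t*` idempotent. Then `u = s·t*·t` lies below both `s` and `t`, and
`u*·u = s*·s·t*·t`, on which `φ` is true by multiplicativity. -/

section

variable {S : Type*} [InverseSemigroup S]

lemma star_eq_self_of_idem {e : S} (he : e * e = e) : star e = e := by
  have h1 : star e * star e = star e := by rw [← star_mul, he]
  have hc : e * star e = star e * e := idem_comm e (star e) he h1
  have h2 : e = star e * e := by
    conv_lhs => rw [← mul_star_mul_self e]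
    rw [hc, mul_assoc, he]
  calc star e = star (star e * e) := by rw [← h2]
    _ = star e * e := by rw [star_mul, star_star]
    _ = e := h2.symm

lemma nle_of_idem_of_mul_eq {e a : S} (he : e * e = e) (h : a * e = e) : nle e a := by
  rw [nle, star_eq_self_of_idem he, he, h]

lemma sigmaEq_of_nle {u s t : S} (hs : nle u s) (ht : nle u t) : sigmaEq s t :=
  ⟨star u * u, idem_star_mul u, by rw [← hs, ← ht]⟩

lemma mul_star_idem_of_sigmaEq (hE : EUnitary S) {s t : S} (h : sigmaEq s t) :
    (s * star t) * (s * star t) = s * star t := by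
  obtain ⟨e, he, hst⟩ := h
  have hf : (t * e * star t) * (t * e * star t) = t * e * star t := by
    simpa only [star_star] using idem_conj he (star t)
  refine hE _ _ hf (nle_of_idem_of_mul_eq hf ?_)
  calc s * star t * (t * e * star t) = s * (star t * t * e) * star t := by
        simp only [mul_assoc]
    _ = s * (e * (star t * t)) * star t := by rw [idem_comm _ e (idem_star_mul t) he]
    _ = s * e * (star t * t * star t) := by simp only [mul_assoc]
    _ = t * e * star t := by rw [hst, star_mul_star_self, mul_assoc]

lemma star_mul_self_of_mul_star_mul_self (s t : S) :
    star (s * (star t * t)) * (s * (star t * t)) = (star s * s) * (star t * t) := by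
  calc star (s * (star t * t)) * (s * (star t * t))
      = (star t * t) * (star s * s) * (star t * t) := by
        simp only [star_mul, star_star, mul_assoc]
    _ = (star s * s) * ((star t * t) * (star t * t)) := by
        rw [idem_comm _ _ (idem_star_mul t) (idem_star_mul s), mul_assoc]
    _ = (star s * s) * (star t * t) := by rw [idem_star_mul t]

lemma nle_mul_star_mul_self_left (s t : S) : nle (s * (star t * t)) s := by
  rw [nle, star_mul_self_of_mul_star_mul_self]
  conv_lhs => rw [← mul_star_mul_self s]
  simp only [mul_assoc]

lemma nle_mul_star_mul_self_right {s t : S} (h : (s * star t) * (s * star t) = s * star t) :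
    nle (s * (star t * t)) t := by
  have hts : t * star s = s * star t := by
    simpa only [star_mul, star_star] using star_eq_self_of_idem h
  rw [nle, star_mul_self_of_mul_star_mul_self]
  calc s * (star t * t) = (s * star t) * (s * star t) * t := by rw [h, mul_assoc]
    _ = (t * star s) * (s * star t) * t := by rw [hts]
    _ = t * (star s * s * (star t * t)) := by simp only [mul_assoc]

end

theorem stmt3 {S : Type*} [InverseSemigroup S] (hE : EUnitary S)
    (s t : S) (χ : SemiChar (Idem S))
    (hs : χ.toFun ⟨star s * s, idem_star_mul s⟩ = true)
    (ht : χ.toFun ⟨star t * t, idem_star_mul t⟩ = true) :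
    sigmaEq s t ↔
      ∃ u : S, nle u s ∧ nle u t ∧
        χ.toFun ⟨star u * u, idem_star_mul u⟩ = true := by
  constructor
  · intro hst
    refine ⟨s * (star t * t), nle_mul_star_mul_self_left s t,
      nle_mul_star_mul_self_right (mul_star_idem_of_sigmaEq hE hst), ?_⟩
    have hu : χ.toFun ⟨_, idem_star_mul (s * (star t * t))⟩ =
        χ.toFun (⟨star s * s, idem_star_mul s⟩ * ⟨star t * t, idem_star_mul t⟩ : Idem S) :=
      congrArg χ.toFun (Subtype.ext (star_mul_self_of_mul_star_mul_self s t))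
    exact hu.trans ((χ.map_mul' _ _).trans (by rw [hs, ht, Bool.and_self]))
  · rintro ⟨u, hus, hut, -⟩
    exact sigmaEq_of_nle hus hut
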